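/- arXiv:2204.02729 — 2 statements merged into one kernel-verified Lean document; each statement's English description precedes it below -/
import Mathlib

section
/- Let g : ℂ² → ℂ be holomorphic, let ξ* ∈ ℝ² with g(ξ*) = 0, and suppose the partial derivatives a = ∂g/∂ξ₁(ξ*) and b = ∂g/∂ξ₂(ξ*) are real with a² + b² ≠ 0. Let η = (η₁, η₂) ∈ ℝ² satisfy a·η₁ + b·η₂ ≠ 0. Then there exists δ > 0 such that for all t with 0 < t ≤ δ, g(ξ₁* + i t η₁, ξ₂* + i t η₂) ≠ 0. -/
/-!
Along the purely imaginary line `t ↦ ξ* + i t η` the function `g` has real-variable derivative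
`i (a η₁ + b η₂) ≠ 0` at `t = 0`, and a curve with non-zero derivative at a point avoids any
given value on a punctured neighbourhood of that point.
-/

open Filter Topology

theorem ContinuousLinearMap.apply_prodMk_eq {𝕜 F : Type*} [NontriviallyNormedField 𝕜]
    [NormedAddCommGroup F] [NormedSpace 𝕜 F] (L : 𝕜 × 𝕜 →L[𝕜] F) (z w : 𝕜) :
    L (z, w) = z • L (1, 0) + w • L (0, 1) := by
  rw [← L.map_smul, ← L.map_smul, ← L.map_add]
  simp

theorem HasFDerivAt.eventually_ne_along_line {𝕜 E F : Type*} [NontriviallyNormedField 𝕜]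
    [NormedAddCommGroup E] [NormedSpace 𝕜 E] [NormedAddCommGroup F] [NormedSpace 𝕜 F]
    {g : E → F} {g' : E →L[𝕜] F} {p v : E} (hg : HasFDerivAt g g' p) (hv : g' v ≠ 0) (c : F) :
    ∀ᶠ t in 𝓝[≠] (0 : 𝕜), g (p + t • v) ≠ c := by
  have hline : HasDerivAt (fun t : 𝕜 => p + t • v) v 0 := by
    simpa using ((hasDerivAt_id (0 : 𝕜)).smul_const v).const_add p
  exact (hg.comp_hasDerivAt_of_eq 0 hline (by simp)).eventually_ne hv

theorem stmt0_general (g : ℂ × ℂ → ℂ) (ξ₁ ξ₂ : ℝ) (hg : AnalyticAt ℂ g ((ξ₁ : ℂ), (ξ₂ : ℂ)))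
    (a b : ℝ)
    (ha : fderiv ℂ g ((ξ₁ : ℂ), (ξ₂ : ℂ)) (1, 0) = (a : ℂ))
    (hb : fderiv ℂ g ((ξ₁ : ℂ), (ξ₂ : ℂ)) (0, 1) = (b : ℂ))
    (η₁ η₂ : ℝ) (hη : a * η₁ + b * η₂ ≠ 0) :
    ∃ δ > (0 : ℝ), ∀ t : ℝ, 0 < t → t ≤ δ →
      g ((ξ₁ : ℂ) + Complex.I * (t : ℂ) * (η₁ : ℂ),
         (ξ₂ : ℂ) + Complex.I * (t : ℂ) * (η₂ : ℂ)) ≠ 0 := by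
  set g' := fderiv ℂ g ((ξ₁ : ℂ), (ξ₂ : ℂ))
  have hg' : HasFDerivAt g (g'.restrictScalars ℝ) ((ξ₁ : ℂ), (ξ₂ : ℂ)) :=
    hg.differentiableAt.hasFDerivAt.restrictScalars ℝ
  have hslope :
      g' (Complex.I * η₁, Complex.I * η₂) = Complex.I * ((a * η₁ + b * η₂ : ℝ) : ℂ) := by
    rw [g'.apply_prodMk_eq, ha, hb]
    push_cast
    simp only [smul_eq_mul]
    ring
  have hslope_ne : g' (Complex.I * η₁, Complex.I * η₂) ≠ 0 := by
    rw [hslope]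
    exact mul_ne_zero Complex.I_ne_zero (Complex.ofReal_ne_zero.mpr hη)
  obtain ⟨δ, hδ, hIoc⟩ := mem_nhdsGT_iff_exists_Ioc_subset.mp
    (nhdsGT_le_nhdsNE 0 (hg'.eventually_ne_along_line hslope_ne 0))
  refine ⟨δ, hδ, fun t ht htδ => ?_⟩
  convert hIoc ⟨ht, htδ⟩ using 3
  simp only [Prod.smul_mk, Prod.mk_add_mk, Complex.real_smul, Prod.mk.injEq]
  constructor <;> ring

/-- If `g` is holomorphic near a real point `ξ*` of its zero set, with real partial
derivatives `a`, `b` there satisfying `a² + b² ≠ 0`, and `η ∈ ℝ²` satisfies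
`a·η₁ + b·η₂ ≠ 0`, then there is `δ > 0` such that `g(ξ* + i t η) ≠ 0` for all
`0 < t ≤ δ`. -/
theorem stmt0 (g : ℂ × ℂ → ℂ) (ξ₁ ξ₂ : ℝ) (hg : AnalyticAt ℂ g ((ξ₁ : ℂ), (ξ₂ : ℂ)))
    (a b : ℝ)
    (ha : fderiv ℂ g ((ξ₁ : ℂ), (ξ₂ : ℂ)) (1, 0) = (a : ℂ))
    (hb : fderiv ℂ g ((ξ₁ : ℂ), (ξ₂ : ℂ)) (0, 1) = (b : ℂ))
    (hz : g ((ξ₁ : ℂ), (ξ₂ : ℂ)) = 0)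
    (hab : a ^ 2 + b ^ 2 ≠ 0)
    (η₁ η₂ : ℝ) (hη : a * η₁ + b * η₂ ≠ 0) :
    ∃ δ > (0 : ℝ), ∀ t : ℝ, 0 < t → t ≤ δ →
      g ((ξ₁ : ℂ) + Complex.I * (t : ℂ) * (η₁ : ℂ),
         (ξ₂ : ℂ) + Complex.I * (t : ℂ) * (η₂ : ℂ)) ≠ 0 :=
  stmt0_general g ξ₁ ξ₂ hg a b ha hb η₁ η₂ hη
end

section
/- Let ρ > 0, β > 0, α ∈ ℝ \ {0}, s ∈ {+1, -1}, and define for ζʳ = (ζ₁ʳ, ζ₂ʳ) ∈ ℝ²: η₁ = -sign(α) β s ζ₁ʳ and η₂ = |α| β s (ρ² - 2(ζ₂ʳ)²). Then Im[s((ζ₂ʳ + iη₂) + α(ζ₁ʳ + iη₁)²)] = |α| β (ρ² - 2((ζ₁ʳ)² + (ζ₂ʳ)²)). In particular this quantity is strictly negative whenever (ζ₁ʳ)² + (ζ₂ʳ)² > ρ²/2, and equals |α| β ρ² > 0 when ζʳ = 0. -/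
open Complex

/-
Only `Im[α (ζ₁ + iη₁)²] = 2αζ₁η₁` and `η₂` contribute; with `s² = 1` and `sign(α) α = |α|`
the two pieces combine to `|α|β(ρ² - 2ζ₂²) - 2|α|βζ₁²`.
-/

theorem Real.sign_mul_self (r : ℝ) : Real.sign r * r = |r| := by
  rcases lt_trichotomy r 0 with h | rfl | h
  · rw [Real.sign_of_neg h, abs_of_neg h]; ring
  · simp
  · rw [Real.sign_of_pos h, abs_of_pos h]; ring

theorem im_deformed_phase (ρ β α s ζ₁ ζ₂ : ℝ) (hs : s ^ 2 = 1) :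
    ((s : ℂ) * (((ζ₂ : ℂ) + I * ((|α| * β * s * (ρ ^ 2 - 2 * ζ₂ ^ 2) : ℝ) : ℂ)) +
        (α : ℂ) * ((ζ₁ : ℂ) + I * ((-(Real.sign α) * β * s * ζ₁ : ℝ) : ℂ)) ^ 2)).im
      = |α| * β * (ρ ^ 2 - 2 * (ζ₁ ^ 2 + ζ₂ ^ 2)) := by
  simp only [mul_im, add_im, add_re, mul_re, I_re, I_im, ofReal_re, ofReal_im, pow_two]
  linear_combination (|α| * β * (ρ ^ 2 - 2 * (ζ₁ ^ 2 + ζ₂ ^ 2))) * hs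
    - (2 * β * ζ₁ ^ 2 * s ^ 2) * Real.sign_mul_self α

/-- Key algebraic identity for the deformation near a saddle on a singularity:
with `η₁ = -sign(α)βsζ₁ʳ`, `η₂ = |α|βs(ρ² - 2(ζ₂ʳ)²)`, one has
`Im[s((ζ₂ʳ + iη₂) + α(ζ₁ʳ + iη₁)²)] = |α|β(ρ² - 2((ζ₁ʳ)² + (ζ₂ʳ)²))`; this is
negative when `(ζ₁ʳ)² + (ζ₂ʳ)² > ρ²/2`, and equals `|α|βρ² > 0` at `ζʳ = 0`. -/
theorem stmt14 (ρ β α s : ℝ) (hρ : 0 < ρ) (hβ : 0 < β) (hα : α ≠ 0)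
    (hs : s = 1 ∨ s = -1) (ζ₁ ζ₂ : ℝ) :
    let η₁ : ℝ := -(Real.sign α) * β * s * ζ₁
    let η₂ : ℝ := |α| * β * s * (ρ ^ 2 - 2 * ζ₂ ^ 2)
    (((s : ℂ) * (((ζ₂ : ℂ) + Complex.I * (η₂ : ℂ)) +
        (α : ℂ) * ((ζ₁ : ℂ) + Complex.I * (η₁ : ℂ)) ^ 2)).im
      = |α| * β * (ρ ^ 2 - 2 * (ζ₁ ^ 2 + ζ₂ ^ 2))) ∧
    (ζ₁ ^ 2 + ζ₂ ^ 2 > ρ ^ 2 / 2 → |α| * β * (ρ ^ 2 - 2 * (ζ₁ ^ 2 + ζ₂ ^ 2)) < 0) ∧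
    (ζ₁ = 0 ∧ ζ₂ = 0 →
      |α| * β * (ρ ^ 2 - 2 * (ζ₁ ^ 2 + ζ₂ ^ 2)) = |α| * β * ρ ^ 2 ∧
      0 < |α| * β * ρ ^ 2) := by
  have hs_sq : s ^ 2 = 1 := by rcases hs with rfl | rfl <;> norm_num
  have hαβ : 0 < |α| * β := mul_pos (abs_pos.mpr hα) hβ
  refine ⟨im_deformed_phase ρ β α s ζ₁ ζ₂ hs_sq, fun hfar => ?_, ?_⟩
  · exact mul_neg_of_pos_of_neg hαβ (by linarith)
  · rintro ⟨rfl, rfl⟩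
    exact ⟨by ring, by positivity⟩
end
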